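/- arXiv:2410.21781 — 7 statements merged into one kernel-verified Lean document; each statement's English description precedes it below -/
import Mathlib

section
/- In a matched cylindrical bracket sequence (a sequence of open and closed brackets arranged on a cycle ℤ_n, with the cylindrical pairing rule recursively pairing each open bracket to a closed bracket with no unpaired brackets between them), if the number of open brackets equals the number of closed brackets and they alternate perfectly or not, the number of unpaired open brackets equals max(0, #open − #closed) and the number of unpaired closed brackets equals max(0, #closed − #open). In particular, if #open = #closed then every bracket gets paired. -/
/-!
Each reduction step deletes one `(` and one `)`, so `#( - #)` is invariant. A word admitting no
step cannot contain both brackets: rotate it to start with `(`; the first `)` after it is then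
immediately preceded by a `(`, which gives a step. Hence the terminal word consists of
`|#( - #)|` copies of a single bracket.
-/

/-- One step of the cylindrical bracket reduction: a cyclic word of brackets
(`true` = '(' and `false` = ')') reduces by deleting a cyclically adjacent pair
consisting of an open bracket immediately followed by a closed bracket. -/
def CycStep (l l' : List Bool) : Prop :=
  ∃ k t, l.rotate k = true :: false :: t ∧ l' = t

namespace CycStep

theorem count_eq_add_one {l l' : List Bool} (h : CycStep l l') (b : Bool) :
    l.count b = l'.count b + 1 := by
  obtain ⟨k, t, hk, rfl⟩ := h
  rw [← (l.rotate_perm k).count_eq b, hk]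
  cases b <;> simp

theorem reflTransGen_count_sub {l m : List Bool} (h : Relation.ReflTransGen CycStep l m) :
    (m.count true : ℤ) - m.count false = l.count true - l.count false := by
  induction h with
  | refl => rfl
  | tail _ hstep ih =>
    rw [← ih, hstep.count_eq_add_one true, hstep.count_eq_add_one false]
    push_cast
    ring

theorem of_rotate {l l' : List Bool} (k : ℕ) (h : CycStep (l.rotate k) l') : CycStep l l' := by
  obtain ⟨j, t, hj, ht⟩ := h
  exact ⟨k + j, t, by rw [← List.rotate_rotate, hj], ht⟩

theorem append_true_false_append (t₁ t₂ : List Bool) :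
    CycStep (t₁ ++ true :: false :: t₂) (t₂ ++ t₁) :=
  ⟨t₁.length, t₂ ++ t₁, by rw [List.rotate_append_length_eq]; rfl, rfl⟩

end CycStep

theorem exists_eq_append_true_false_append :
    ∀ {t : List Bool}, false ∈ t → ∃ t₁ t₂, true :: t = t₁ ++ true :: false :: t₂
  | false :: t, _ => ⟨[], t, rfl⟩
  | true :: t, hf => by
    obtain ⟨t₁, t₂, ht⟩ := exists_eq_append_true_false_append (by simpa using hf)
    exact ⟨true :: t₁, t₂, by rw [ht]; rfl⟩

theorem exists_cycStep_of_mem {m : List Bool} (ht : true ∈ m) (hf : false ∈ m) :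
    ∃ m', CycStep m m' := by
  obtain ⟨p, q, rfl⟩ := List.append_of_mem ht
  have hrot : (p ++ true :: q).rotate p.length = true :: (q ++ p) :=
    List.rotate_append_length_eq p (true :: q)
  obtain ⟨t₁, t₂, hsplit⟩ :=
    exists_eq_append_true_false_append (t := q ++ p) (by simpa [or_comm] using hf)
  refine ⟨t₂ ++ t₁, CycStep.of_rotate p.length ?_⟩
  rw [hrot, hsplit]
  exact CycStep.append_true_false_append t₁ t₂

/-- in the cylindrical bracket pairing on `ℤ_n`, after the recursive pairing
process terminates (no further pair can be matched), the number of unpaired open brackets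
is `max(0, #open − #closed)` and the number of unpaired closed brackets is
`max(0, #closed − #open)` (truncated subtraction on `ℕ`). In particular, if
`#open = #closed` then every bracket is paired. -/
theorem cyclic_bracket_unpaired_count (l m : List Bool)
    (h : Relation.ReflTransGen CycStep l m) (hm : ∀ m', ¬ CycStep m m') :
    m.count true = l.count true - l.count false ∧
    m.count false = l.count false - l.count true ∧
    (l.count true = l.count false → m = []) := by
  have hinv := CycStep.reflTransGen_count_sub h
  have hlen := List.count_true_add_count_false m
  have hzero : m.count true = 0 ∨ m.count false = 0 := by
    rw [List.count_eq_zero, List.count_eq_zero]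
    by_contra! hboth
    obtain ⟨m', hm'⟩ := exists_cycStep_of_mem hboth.1 hboth.2
    exact hm m' hm'
  refine ⟨by omega, by omega, fun heq => List.eq_nil_of_length_eq_zero ?_⟩
  omega
end

section
/- The row-swapping involution σ_i on fermionic multiline queues is an involution: σ_i(σ_i(Q)) = Q for every fermionic multiline queue Q = (Q_1,...,Q_k) with k ≥ 2 rows and every 1 ≤ i < k. -/
/-!
Split the bracket word of `Par(A,B)` as `w₁ w₂`, where `w₁` reduces to the linearly unmatched
closes `C` and `w₂` to the linearly unmatched opens `O` (particles in both rows pair with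
themselves and can be ignored). If `|C| ≤ |O|`, then `σ` moves the `|O| - |C|` earliest opens `D`
of `O` down to `A`. In the new word they become closes with no open to their left, so the linear
residue becomes `(O', D ++ C)` where `O = O' ++ D`; its cylindrically unmatched part is exactly
the closes `D`, and `σ` moves them back. The case `|O| < |C|` is symmetric: the latest surplus
closes become opens with nothing to their right.
-/

/-- Linear bracket-matching pass.  Tokens are `(site, isOpen)`.  The second argument is the
stack of currently unmatched open brackets (most recent first), the third accumulates the
linearly unmatched closed brackets (most recent first). -/
def pairProcess {α : Type} : List (α × Bool) → List α → List α → List α × List α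
  | [], opens, closes => (opens, closes)
  | (a, true) :: ts, opens, closes => pairProcess ts (a :: opens) closes
  | (a, false) :: ts, [], closes => pairProcess ts [] (a :: closes)
  | (_, false) :: ts, _ :: opens, closes => pairProcess ts opens closes

/-- The token list of `Par(A,B)`: scanning sites `j = 1, …, n` in order, record an open
bracket for `j ∈ B` (the row above) and then a closed bracket for `j ∈ A` (the row below). -/
def parTokens {n : ℕ} (A B : Finset (Fin n)) : List (Fin n × Bool) :=
  (List.finRange n).flatMap
    (fun j => (if j ∈ B then [(j, true)] else []) ++ (if j ∈ A then [(j, false)] else []))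

/-- Result of the linear pass on `Par(A,B)`. -/
def parRes {n : ℕ} (A B : Finset (Fin n)) : List (Fin n) × List (Fin n) :=
  pairProcess (parTokens A B) [] []

/-- The set of cylindrically unpaired particles of `B` (open brackets) in `Par(A,B)`:
after the linear pass, the cyclic rule additionally matches `min` many remaining opens
and closes, leaving the earliest surplus opens unmatched. -/
def unmatchedOpen {n : ℕ} (A B : Finset (Fin n)) : Finset (Fin n) :=
  ((parRes A B).1.drop (parRes A B).2.length).toFinset

/-- The set of cylindrically unpaired particles of `A` (closed brackets) in `Par(A,B)`. -/
def unmatchedClose {n : ℕ} (A B : Finset (Fin n)) : Finset (Fin n) :=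
  ((parRes A B).2.take ((parRes A B).2.length - (parRes A B).1.length)).toFinset

/-- The row-swapping involution on a pair of rows `(A, B)` (`A` below, `B` above):
all cylindrically unmatched entries of `Par(A,B)` are exchanged between the two rows. -/
def sigmaPair {n : ℕ} (A B : Finset (Fin n)) : Finset (Fin n) × Finset (Fin n) :=
  ((A \ unmatchedClose A B) ∪ unmatchedOpen A B,
   (B \ unmatchedOpen A B) ∪ unmatchedClose A B)

/-- The involution `σ_i` acting on rows `i` and `i+1` of a multiline queue. -/
def sigmaRow {n : ℕ} (i : ℕ) (Q : ℕ → Finset (Fin n)) : ℕ → Finset (Fin n) :=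
  fun j =>
    if j = i then (sigmaPair (Q i) (Q (i + 1))).1
    else if j = i + 1 then (sigmaPair (Q i) (Q (i + 1))).2
    else Q j

namespace BracketWord

variable {α : Type}

theorem pairProcess_append (w₁ w₂ : List (α × Bool)) (s cl : List α) :
    pairProcess (w₁ ++ w₂) s cl =
      pairProcess w₂ (pairProcess w₁ s cl).1 (pairProcess w₁ s cl).2 := by
  induction w₁ generalizing s cl with
  | nil => rfl
  | cons t w ih =>
    obtain ⟨a, _ | _⟩ := t
    · cases s <;> exact ih _ _
    · exact ih _ _

inductive Balanced : List (α × Bool) → Prop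
  | nil : Balanced []
  | wrap (a b : α) {v w : List (α × Bool)} :
      Balanced v → Balanced w → Balanced ((a, true) :: v ++ (b, false) :: w)

/-- `w` reduces, after cancelling matched pairs, to the open brackets `O`, listed latest first
as on the stack of `pairProcess`. -/
inductive UnmatchedOpens : List (α × Bool) → List α → Prop
  | nil : UnmatchedOpens [] []
  | cons (a : α) {v w : List (α × Bool)} {O : List α} :
      Balanced v → UnmatchedOpens w O → UnmatchedOpens ((a, true) :: v ++ w) (O ++ [a])

inductive UnmatchedCloses : List (α × Bool) → List α → Prop
  | balanced {v : List (α × Bool)} : Balanced v → UnmatchedCloses v []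
  | cons (a : α) {v w : List (α × Bool)} {C : List α} :
      Balanced v → UnmatchedCloses w C → UnmatchedCloses (v ++ (a, false) :: w) (C ++ [a])

theorem Balanced.append {v w : List (α × Bool)} (hv : Balanced v) (hw : Balanced w) :
    Balanced (v ++ w) := by
  induction hv with
  | nil => exact hw
  | wrap a b _ _ _ ih => simpa using Balanced.wrap a b ‹_› ih

theorem Balanced.pairProcess_eq {v : List (α × Bool)} (h : Balanced v) (s cl : List α) :
    pairProcess v s cl = (s, cl) := by
  induction h generalizing s cl with
  | nil => rfl
  | wrap a b _ _ ihv ihw => simp [pairProcess, pairProcess_append, ihv, ihw]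

theorem UnmatchedOpens.pairProcess_eq {w : List (α × Bool)} {O : List α}
    (h : UnmatchedOpens w O) (s cl : List α) : pairProcess w s cl = (O ++ s, cl) := by
  induction h generalizing s with
  | nil => rfl
  | cons a hv _ ih => simp [pairProcess, pairProcess_append, hv.pairProcess_eq, ih]

theorem UnmatchedCloses.pairProcess_eq {w : List (α × Bool)} {C : List α}
    (h : UnmatchedCloses w C) (cl : List α) : pairProcess w [] cl = ([], C ++ cl) := by
  induction h generalizing cl with
  | balanced hv => simp [hv.pairProcess_eq]
  | cons a hv _ ih => simp [pairProcess, pairProcess_append, hv.pairProcess_eq, ih]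

theorem UnmatchedOpens.append {w₁ w₂ : List (α × Bool)} {O₁ O₂ : List α}
    (h₁ : UnmatchedOpens w₁ O₁) (h₂ : UnmatchedOpens w₂ O₂) :
    UnmatchedOpens (w₁ ++ w₂) (O₂ ++ O₁) := by
  induction h₁ with
  | nil => simpa using h₂
  | cons a hv _ ih => simpa using UnmatchedOpens.cons a hv ih

theorem UnmatchedCloses.balanced_append {v w : List (α × Bool)} {C : List α} (hv : Balanced v)
    (h : UnmatchedCloses w C) : UnmatchedCloses (v ++ w) C := by
  cases h with
  | balanced hw => exact .balanced (hv.append hw)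
  | cons a hu hw => simpa using UnmatchedCloses.cons a (hv.append hu) hw

theorem UnmatchedCloses.append {w₁ w₂ : List (α × Bool)} {C₁ C₂ : List α}
    (h₁ : UnmatchedCloses w₁ C₁) (h₂ : UnmatchedCloses w₂ C₂) :
    UnmatchedCloses (w₁ ++ w₂) (C₂ ++ C₁) := by
  induction h₁ with
  | balanced hv => simpa using h₂.balanced_append hv
  | cons a hv _ ih => simpa using UnmatchedCloses.cons a hv ih

theorem UnmatchedOpens.mem {w : List (α × Bool)} {O : List α} (h : UnmatchedOpens w O)
    {x : α} (hx : x ∈ O) : (x, true) ∈ w := by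
  induction h with
  | nil => simp at hx
  | cons a _ _ ih =>
    rcases List.mem_append.mp hx with hx | hx
    · simp [ih hx]
    · simp_all

theorem UnmatchedCloses.mem {w : List (α × Bool)} {C : List α} (h : UnmatchedCloses w C)
    {x : α} (hx : x ∈ C) : (x, false) ∈ w := by
  induction h with
  | balanced => simp at hx
  | cons a _ _ ih =>
    rcases List.mem_append.mp hx with hx | hx
    · simp [ih hx]
    · simp_all

theorem exists_unmatchedCloses_append_unmatchedOpens (w : List (α × Bool)) :
    ∃ w₁ w₂ C O, w = w₁ ++ w₂ ∧ UnmatchedCloses w₁ C ∧ UnmatchedOpens w₂ O := by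
  induction w with
  | nil => exact ⟨[], [], [], [], rfl, .balanced .nil, .nil⟩
  | cons t w ih =>
    obtain ⟨w₁, w₂, C, O, rfl, hC, hO⟩ := ih
    obtain ⟨a, _ | _⟩ := t
    · exact ⟨_ :: w₁, w₂, C ++ [a], O, rfl, .cons a .nil hC, hO⟩
    · cases hC with
      | balanced hv => exact ⟨[], _, [], O ++ [a], by simp, .balanced .nil, .cons a hv hO⟩
      | @cons c v w₁ C hv hC =>
        refine ⟨(a, true) :: v ++ (c, false) :: w₁, w₂, C, O, by simp, ?_, hO⟩
        simpa using hC.balanced_append (Balanced.wrap a c hv .nil)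

theorem pairProcess_unmatchedCloses_append_unmatchedOpens {w₁ w₂ : List (α × Bool)}
    {C O : List α} (hC : UnmatchedCloses w₁ C) (hO : UnmatchedOpens w₂ O) :
    pairProcess (w₁ ++ w₂) [] [] = (O, C) := by
  simp [pairProcess_append, hC.pairProcess_eq, hO.pairProcess_eq]

theorem mem_pairProcess_fst {w : List (α × Bool)} {x : α}
    (hx : x ∈ (pairProcess w [] []).1) : (x, true) ∈ w := by
  obtain ⟨w₁, w₂, C, O, rfl, hC, hO⟩ := exists_unmatchedCloses_append_unmatchedOpens w
  rw [pairProcess_unmatchedCloses_append_unmatchedOpens hC hO] at hx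
  exact List.mem_append_right _ (hO.mem hx)

theorem mem_pairProcess_snd {w : List (α × Bool)} {x : α}
    (hx : x ∈ (pairProcess w [] []).2) : (x, false) ∈ w := by
  obtain ⟨w₁, w₂, C, O, rfl, hC, hO⟩ := exists_unmatchedCloses_append_unmatchedOpens w
  rw [pairProcess_unmatchedCloses_append_unmatchedOpens hC hO] at hx
  exact List.mem_append_left _ (hC.mem hx)

theorem UnmatchedOpens.exists_append {w : List (α × Bool)} {O D : List α}
    (h : UnmatchedOpens w (O ++ D)) :
    ∃ w₁ w₂, w = w₁ ++ w₂ ∧ UnmatchedOpens w₁ D ∧ UnmatchedOpens w₂ O := by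
  generalize hOD : O ++ D = O' at h
  induction h generalizing D with
  | nil =>
    obtain ⟨rfl, rfl⟩ := List.append_eq_nil_iff.mp hOD
    exact ⟨[], [], rfl, .nil, .nil⟩
  | @cons a v w O' hv hw ih =>
    rcases D.eq_nil_or_concat with rfl | ⟨D, d, rfl⟩
    · rw [List.append_nil] at hOD
      exact ⟨[], _, rfl, .nil, hOD ▸ .cons a hv hw⟩
    · have hOD : (O ++ D) ++ [d] = O' ++ [a] := by simpa using hOD
      obtain ⟨hO, had⟩ := List.append_inj' hOD rfl
      obtain rfl : d = a := by simpa using had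
      obtain ⟨w₁, w₂, rfl, h₁, h₂⟩ := ih hO
      exact ⟨(d, true) :: v ++ w₁, w₂, by simp, by simpa using UnmatchedOpens.cons d hv h₁, h₂⟩

theorem UnmatchedCloses.exists_append {w : List (α × Bool)} {D C : List α}
    (h : UnmatchedCloses w (D ++ C)) :
    ∃ w₁ w₂, w = w₁ ++ w₂ ∧ UnmatchedCloses w₁ C ∧ UnmatchedCloses w₂ D := by
  generalize hDC : D ++ C = C' at h
  induction h generalizing C with
  | @balanced v hv =>
    obtain ⟨rfl, rfl⟩ := List.append_eq_nil_iff.mp hDC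
    exact ⟨[], v, rfl, .balanced .nil, .balanced hv⟩
  | @cons a v w C' hv hw ih =>
    rcases C.eq_nil_or_concat with rfl | ⟨C, c, rfl⟩
    · rw [List.append_nil] at hDC
      exact ⟨[], _, rfl, .balanced .nil, hDC ▸ .cons a hv hw⟩
    · have hDC : (D ++ C) ++ [c] = C' ++ [a] := by simpa using hDC
      obtain ⟨hC, hca⟩ := List.append_inj' hDC rfl
      obtain rfl : c = a := by simpa using hca
      obtain ⟨w₁, w₂, rfl, h₁, h₂⟩ := ih hC
      exact ⟨v ++ (c, false) :: w₁, w₂, by simp, by simpa using UnmatchedCloses.cons c hv h₁, h₂⟩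

theorem pairProcess_flatMap_congr {β : Type} {f g : β → List (α × Bool)}
    (l : List β) (h : ∀ b ∈ l, ∀ s cl, pairProcess (f b) s cl = pairProcess (g b) s cl)
    (s cl : List α) : pairProcess (l.flatMap f) s cl = pairProcess (l.flatMap g) s cl := by
  induction l generalizing s cl with
  | nil => rfl
  | cons b l ih =>
    simp only [List.flatMap_cons, pairProcess_append, h b List.mem_cons_self]
    exact ih (fun b hb => h b (List.mem_cons_of_mem _ hb)) _ _

variable [DecidableEq α]

def mapFlip (S : Finset α) (w : List (α × Bool)) : List (α × Bool) :=
  w.map fun t => if t.1 ∈ S then (t.1, !t.2) else t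

@[simp] theorem mapFlip_cons (S : Finset α) (t : α × Bool) (w : List (α × Bool)) :
    mapFlip S (t :: w) = (if t.1 ∈ S then (t.1, !t.2) else t) :: mapFlip S w := rfl

@[simp] theorem mapFlip_append (S : Finset α) (w₁ w₂ : List (α × Bool)) :
    mapFlip S (w₁ ++ w₂) = mapFlip S w₁ ++ mapFlip S w₂ := List.map_append

theorem mapFlip_eq_self {S : Finset α} {w : List (α × Bool)} (h : ∀ t ∈ w, t.1 ∉ S) :
    mapFlip S w = w :=
  List.map_congr_left (fun t ht => if_neg (h t ht)) |>.trans (List.map_id w)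

theorem mapFlip_step {S : Finset α} {a : α} {b : Bool} {v w : List (α × Bool)} {D : List α}
    (hnd : ((a, b) :: (v ++ w)).Nodup) (hD : ∀ x ∈ D, (x, b) ∈ w)
    (hS : ∀ t ∈ (a, b) :: (v ++ w), t.1 ∈ S ↔ t.2 = b ∧ t.1 ∈ D ++ [a]) :
    a ∈ S ∧ mapFlip S v = v ∧ ∀ t ∈ w, t.1 ∈ S ↔ t.2 = b ∧ t.1 ∈ D := by
  simp only [List.nodup_cons, List.nodup_append, List.mem_append, not_or] at hnd
  obtain ⟨⟨hav, haw⟩, -, -, hvw⟩ := hnd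
  refine ⟨(hS _ List.mem_cons_self).2 (by simp), mapFlip_eq_self ?_, fun t ht => ?_⟩
  · rintro ⟨x, c⟩ ht hx
    obtain ⟨rfl, hxD⟩ := (hS _ (by simp [ht])).1 hx
    rcases List.mem_append.mp hxD with hxD | hxa
    · exact hvw _ ht _ (hD x hxD) rfl
    · obtain rfl : x = a := by simpa using hxa
      exact hav ht
  · rw [hS t (by simp [ht]), List.mem_append, List.mem_singleton]
    have : ¬(t.2 = b ∧ t.1 = a) := fun ⟨h₁, h₂⟩ => haw (by rw [← h₁, ← h₂]; exact ht)
    tauto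

theorem UnmatchedOpens.mapFlip {S : Finset α} {w : List (α × Bool)} {D : List α}
    (h : UnmatchedOpens w D) (hnd : w.Nodup) (hS : ∀ t ∈ w, t.1 ∈ S ↔ t.2 = true ∧ t.1 ∈ D) :
    UnmatchedCloses (mapFlip S w) D := by
  induction h with
  | nil => exact .balanced .nil
  | cons a hv hw ih =>
    obtain ⟨ha, hv', hS'⟩ := mapFlip_step hnd (fun x hx => hw.mem hx) hS
    have hw' := (ih (hnd.sublist (by simp)) hS').balanced_append hv
    simpa [ha, hv'] using UnmatchedCloses.cons a .nil hw'

theorem UnmatchedCloses.mapFlip {S : Finset α} {w : List (α × Bool)} {D : List α}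
    (h : UnmatchedCloses w D) (hnd : w.Nodup) (hS : ∀ t ∈ w, t.1 ∈ S ↔ t.2 = false ∧ t.1 ∈ D) :
    ∃ v u, mapFlip S w = v ++ u ∧ Balanced v ∧ UnmatchedOpens u D := by
  induction h with
  | @balanced v hv =>
    refine ⟨v, [], ?_, hv, .nil⟩
    rw [List.append_nil, mapFlip_eq_self fun t ht hx => by simpa using (hS t ht).1 hx]
  | @cons a v w D hv hw ih =>
    obtain ⟨ha, hv', hS'⟩ := mapFlip_step (hnd.perm List.perm_middle) (fun x hx => hw.mem hx)
      (fun t ht => hS t (List.perm_middle.mem_iff.mpr ht))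
    obtain ⟨v', u, hvu, hv'', hu⟩ := ih (hnd.sublist (by simp)) hS'
    exact ⟨v, (a, true) :: v' ++ u, by simp [ha, hv', hvu], hv, .cons a hv'' hu⟩

end BracketWord

open BracketWord

section

variable {n : ℕ} {A B : Finset (Fin n)} {O D C : List (Fin n)}

@[simp] theorem mem_parTokens_true {x : Fin n} : (x, true) ∈ parTokens A B ↔ x ∈ B := by
  simp [parTokens]

@[simp] theorem mem_parTokens_false {x : Fin n} : (x, false) ∈ parTokens A B ↔ x ∈ A := by
  simp [parTokens]

theorem nodup_parTokens (A B : Finset (Fin n)) : (parTokens A B).Nodup := by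
  refine List.nodup_flatMap.mpr ⟨fun j _ => ?_, (List.nodup_finRange n).pairwise_of_forall_ne ?_⟩
  · split_ifs <;> simp
  · intro i _ j _ hij
    simp only [Function.onFun, List.disjoint_left]
    split_ifs <;> simp [hij]

/-- A particle present in both rows pairs with itself, so it can be removed from both. -/
theorem parRes_sdiff (A B : Finset (Fin n)) : parRes A B = parRes (A \ B) (B \ A) := by
  refine pairProcess_flatMap_congr _ (fun j _ s cl => ?_) _ _
  by_cases hA : j ∈ A <;> by_cases hB : j ∈ B <;> simp [hA, hB, pairProcess]

theorem mem_parRes_fst {x : Fin n} (hx : x ∈ (parRes A B).1) : x ∈ B ∧ x ∉ A := by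
  rw [parRes_sdiff] at hx
  simpa using mem_pairProcess_fst hx

theorem mem_parRes_snd {x : Fin n} (hx : x ∈ (parRes A B).2) : x ∈ A ∧ x ∉ B := by
  rw [parRes_sdiff] at hx
  simpa using mem_pairProcess_snd hx

theorem parTokens_union_sdiff {S : Finset (Fin n)} (hS : ∀ x ∈ S, x ∈ B ∧ x ∉ A) :
    parTokens (A ∪ S) (B \ S) = mapFlip S (parTokens A B) := by
  rw [parTokens, parTokens, mapFlip, List.map_flatMap]
  refine List.flatMap_congr fun j _ => ?_
  by_cases hj : j ∈ S
  · simp [hj, (hS j hj).1, (hS j hj).2]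
  · by_cases hA : j ∈ A <;> by_cases hB : j ∈ B <;> simp [hj, hA, hB]

theorem parTokens_sdiff_union {S : Finset (Fin n)} (hS : ∀ x ∈ S, x ∈ A ∧ x ∉ B) :
    parTokens (A \ S) (B ∪ S) = mapFlip S (parTokens A B) := by
  rw [parTokens, parTokens, mapFlip, List.map_flatMap]
  refine List.flatMap_congr fun j _ => ?_
  by_cases hj : j ∈ S
  · simp [hj, (hS j hj).1, (hS j hj).2]
  · by_cases hA : j ∈ A <;> by_cases hB : j ∈ B <;> simp [hj, hA, hB]

theorem parRes_union_sdiff (h : parRes A B = (O ++ D, C)) :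
    parRes (A ∪ D.toFinset) (B \ D.toFinset) = (O, D ++ C) := by
  obtain ⟨w₁, w₂, C', O', hw, hC, hO⟩ :=
    exists_unmatchedCloses_append_unmatchedOpens (parTokens A B)
  obtain ⟨rfl, rfl⟩ : O' = O ++ D ∧ C' = C := by
    rw [parRes, hw, pairProcess_unmatchedCloses_append_unmatchedOpens hC hO] at h
    simpa using h
  obtain ⟨u₁, u₂, rfl, hu₁, hu₂⟩ := hO.exists_append
  have hDB : ∀ x ∈ D.toFinset, x ∈ B ∧ x ∉ A := fun x hx =>
    mem_parRes_fst (by simp_all)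
  have hS : ∀ t ∈ parTokens A B, t.1 ∈ D.toFinset ↔ t.2 = true ∧ t.1 ∈ D := by
    rintro ⟨x, _ | _⟩ ht
    · simpa using fun hx => (hDB x (List.mem_toFinset.mpr hx)).2 (mem_parTokens_false.mp ht)
    · simp
  have hnd := nodup_parTokens A B
  rw [hw] at hnd hS
  have hfix : ∀ t ∈ w₁ ++ u₂, t.1 ∉ D.toFinset := by
    rintro ⟨x, b⟩ ht hx
    obtain ⟨rfl, hxD⟩ := (hS _ (by simp only [List.mem_append] at ht ⊢; tauto)).1 hx
    simp only [List.nodup_append, List.mem_append] at hnd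
    rcases List.mem_append.mp ht with ht | ht
    · exact hnd.2.2 _ ht _ (Or.inl (hu₁.mem hxD)) rfl
    · exact hnd.2.1.2.2 _ (hu₁.mem hxD) _ ht rfl
  rw [parRes, parTokens_union_sdiff hDB, hw, mapFlip_append, mapFlip_append,
    mapFlip_eq_self fun t ht => hfix t (List.mem_append_left _ ht),
    mapFlip_eq_self fun t ht => hfix t (List.mem_append_right _ ht), ← List.append_assoc]
  refine pairProcess_unmatchedCloses_append_unmatchedOpens (hC.append ?_) hu₂
  exact hu₁.mapFlip (hnd.sublist (by simp)) fun t ht => hS t (by simp [ht])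

theorem parRes_sdiff_union (h : parRes A B = (O, D ++ C)) :
    parRes (A \ D.toFinset) (B ∪ D.toFinset) = (O ++ D, C) := by
  obtain ⟨w₁, w₂, C', O', hw, hC, hO⟩ :=
    exists_unmatchedCloses_append_unmatchedOpens (parTokens A B)
  obtain ⟨rfl, rfl⟩ : O' = O ∧ C' = D ++ C := by
    rw [parRes, hw, pairProcess_unmatchedCloses_append_unmatchedOpens hC hO] at h
    simpa using h
  obtain ⟨u₁, u₂, rfl, hu₁, hu₂⟩ := hC.exists_append
  have hDA : ∀ x ∈ D.toFinset, x ∈ A ∧ x ∉ B := fun x hx =>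
    mem_parRes_snd (by simp_all)
  have hS : ∀ t ∈ parTokens A B, t.1 ∈ D.toFinset ↔ t.2 = false ∧ t.1 ∈ D := by
    rintro ⟨x, _ | _⟩ ht
    · simp
    · simpa using fun hx => (hDA x (List.mem_toFinset.mpr hx)).2 (mem_parTokens_true.mp ht)
  have hnd := nodup_parTokens A B
  rw [hw, List.append_assoc] at hnd hS
  have hfix : ∀ t ∈ u₁ ++ w₂, t.1 ∉ D.toFinset := by
    rintro ⟨x, b⟩ ht hx
    obtain ⟨rfl, hxD⟩ := (hS _ (by simp only [List.mem_append] at ht ⊢; tauto)).1 hx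
    simp only [List.nodup_append, List.mem_append] at hnd
    rcases List.mem_append.mp ht with ht | ht
    · exact hnd.2.2 _ ht _ (Or.inl (hu₂.mem hxD)) rfl
    · exact hnd.2.1.2.2 _ (hu₂.mem hxD) _ ht rfl
  obtain ⟨v, u, hvu, hv, hu⟩ :=
    hu₂.mapFlip (hnd.sublist (by simp)) fun t ht => hS t (by simp [ht])
  rw [parRes, parTokens_sdiff_union hDA, hw, mapFlip_append, mapFlip_append,
    mapFlip_eq_self fun t ht => hfix t (List.mem_append_left _ ht),
    mapFlip_eq_self fun t ht => hfix t (List.mem_append_right _ ht), hvu,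
    show u₁ ++ (v ++ u) ++ w₂ = (u₁ ++ v) ++ (u ++ w₂) by simp]
  exact pairProcess_unmatchedCloses_append_unmatchedOpens
    (by simpa using hu₁.append (.balanced hv)) (hu.append hO)

theorem sigmaPair_of_parRes_eq_surplus_opens (h : parRes A B = (O ++ D, C))
    (hlen : O.length = C.length) : sigmaPair A B = (A ∪ D.toFinset, B \ D.toFinset) := by
  have hO : unmatchedOpen A B = D.toFinset := by
    rw [unmatchedOpen, h, ← hlen, List.drop_left]
  have hC : unmatchedClose A B = ∅ := by
    simp [unmatchedClose, h, hlen]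
  simp [sigmaPair, hO, hC]

theorem sigmaPair_of_parRes_eq_surplus_closes (h : parRes A B = (O, D ++ C))
    (hlen : C.length = O.length) : sigmaPair A B = (A \ D.toFinset, B ∪ D.toFinset) := by
  have hO : unmatchedOpen A B = ∅ := by
    simp [unmatchedOpen, h, ← hlen]
  have hC : unmatchedClose A B = D.toFinset := by
    simp [unmatchedClose, h, hlen]
  simp [sigmaPair, hO, hC]

theorem sigmaPair_sigmaPair (A B : Finset (Fin n)) :
    sigmaPair (sigmaPair A B).1 (sigmaPair A B).2 = (A, B) := by
  rcases h : parRes A B with ⟨O, C⟩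
  rcases le_or_gt C.length O.length with hle | hlt
  · rw [← List.take_append_drop C.length O] at h
    set D := O.drop C.length
    have hD : ∀ x ∈ D.toFinset, x ∈ B ∧ x ∉ A := fun x hx => mem_parRes_fst (by simp_all)
    rw [sigmaPair_of_parRes_eq_surplus_opens h (by simp; omega),
      sigmaPair_of_parRes_eq_surplus_closes (parRes_union_sdiff h) (by simp; omega),
      Finset.union_sdiff_cancel_right (Finset.disjoint_left.mpr fun x hA hx => (hD x hx).2 hA),
      Finset.sdiff_union_of_subset fun x hx => (hD x hx).1]
  · rw [← List.take_append_drop (C.length - O.length) C] at h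
    set D := C.take (C.length - O.length)
    have hD : ∀ x ∈ D.toFinset, x ∈ A ∧ x ∉ B := fun x hx => mem_parRes_snd (by simp_all)
    rw [sigmaPair_of_parRes_eq_surplus_closes h (by simp; omega),
      sigmaPair_of_parRes_eq_surplus_opens (parRes_sdiff_union h) (by simp; omega),
      Finset.sdiff_union_of_subset fun x hx => (hD x hx).1,
      Finset.union_sdiff_cancel_right (Finset.disjoint_left.mpr fun x hB hx => (hD x hx).2 hB)]

end

theorem sigmaRow_involutive_general (n : ℕ) (Q : ℕ → Finset (Fin n)) (i : ℕ) :
    sigmaRow i (sigmaRow i Q) = Q := by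
  funext j
  by_cases hj : j = i
  · subst hj
    simp [sigmaRow, sigmaPair_sigmaPair]
  · by_cases hj' : j = i + 1 <;> simp [sigmaRow, sigmaPair_sigmaPair, hj, hj']

/-- the row-swapping operation `σ_i` on fermionic multiline queues with
`k ≥ 2` rows is an involution: `σ_i (σ_i Q) = Q` for all `1 ≤ i < k`
(here rows are indexed by `0, …, k-1` and `σ_i` acts on rows `i` and `i+1`). -/
theorem sigmaRow_involutive (n k : ℕ) (hk : 2 ≤ k) (Q : ℕ → Finset (Fin n))
    (i : ℕ) (hi : i + 1 < k) :
    sigmaRow i (sigmaRow i Q) = Q :=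
  sigmaRow_involutive_general n Q i
end

section
/- Let F̃ and R̃ be the forward and reverse ringing-path maps on pairs (D, i), where D is a bosonic multiline queue of type (λ,n) with L = λ_1 rows and i ∈ ℤ_n. Then R̃(F̃(D,i)) = (D,i) and F̃(R̃(D,i)) = (D,i). -/
/-- Forward ringing path on a bosonic multiline queue (rows indexed from `0`):
`bfPath D i j = 𝔞_{j+1}`, with `𝔞_1 = i` and `𝔞_{j+1} = 𝔞_j` if `𝔞_j ∉ D_j`,
otherwise `𝔞_j + 1` (mod `n`). -/
def bfPath {n : ℕ} (D : ℕ → Multiset (ZMod n)) (i : ZMod n) : ℕ → ZMod n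
  | 0 => i
  | j + 1 => if bfPath D i j ∈ D j then bfPath D i j + 1 else bfPath D i j

/-- Forward ringing transition `F̃(D, i) = (D', 𝔞_{L+1} − 1)`: in each row `j` with
`𝔞_j ∈ D_j`, one particle hops from site `𝔞_j` to site `𝔞_j + 1`. -/
def bF {n : ℕ} (L : ℕ) (D : ℕ → Multiset (ZMod n)) (i : ZMod n) :
    (ℕ → Multiset (ZMod n)) × ZMod n :=
  (fun j =>
    if j < L then
      (if bfPath D i j ∈ D j then (bfPath D i j + 1) ::ₘ (D j).erase (bfPath D i j) else D j)
    else D j,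
   bfPath D i L - 1)

/-- Reverse ringing path: `brPath L D i t = 𝔟_{L−t}`, with `𝔟_L = i` and
`𝔟_j = 𝔟_{j+1}` if `𝔟_{j+1} + 1 ∉ D_{j+1}`, else `𝔟_{j+1} − 1`
(rows `1, …, L` of the paper are indexed `0, …, L-1` here). -/
def brPath {n : ℕ} (L : ℕ) (D : ℕ → Multiset (ZMod n)) (i : ZMod n) : ℕ → ZMod n
  | 0 => i
  | t + 1 =>
    if brPath L D i t + 1 ∈ D (L - 1 - t) then brPath L D i t - 1 else brPath L D i t

/-- Reverse ringing transition `R̃(D, i) = (D'', 𝔟_0 + 1)`: in each row `j` with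
`𝔟_j + 1 ∈ D_j`, one particle hops from site `𝔟_j + 1` to site `𝔟_j`. -/
def bR {n : ℕ} (L : ℕ) (D : ℕ → Multiset (ZMod n)) (i : ZMod n) :
    (ℕ → Multiset (ZMod n)) × ZMod n :=
  (fun j =>
    if j < L then
      (let b := brPath L D i (L - 1 - j);
       if b + 1 ∈ D j then b ::ₘ (D j).erase (b + 1) else D j)
    else D j,
   brPath L D i L + 1)

/-- Total number of particles at site `s` (summed over all `L` rows). -/
def colCount {n : ℕ} (L : ℕ) (D : ℕ → Multiset (ZMod n)) (s : ZMod n) : ℕ :=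
  ∑ t ∈ Finset.range L, (D t).count s

/-- Column `s` of `D` is empty: no row contains site `s`. -/
def colEmpty {n : ℕ} (L : ℕ) (D : ℕ → Multiset (ZMod n)) (s : ZMod n) : Prop :=
  ∀ t, t < L → s ∉ D t

/-!
Write `c = 𝔟 + 1` for the reverse path. Then both maps are sweeps of one local move, `hop d`:
if a particle sits at the cursor, it moves by `d` and the cursor follows it. `F̃` sweeps the
rows top-down with `d = 1`, `R̃` sweeps them bottom-up with `d = -1`, and `hop (-d)` undoes
`hop d`. By induction over the rows, the reverse sweep of `F̃(D, i)` therefore runs along the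
forward path (and the forward sweep of `R̃(D, i)` along the reverse path) and restores every row.
-/

def hop {G : Type*} [AddGroup G] [DecidableEq G] (d : G) (p : Multiset G × G) :
    Multiset G × G :=
  if p.2 ∈ p.1 then ((p.2 + d) ::ₘ p.1.erase p.2, p.2 + d) else p

theorem hop_neg_hop {G : Type*} [AddGroup G] [DecidableEq G] (d : G) (p : Multiset G × G) :
    hop (-d) (hop d p) = p := by
  obtain ⟨m, a⟩ := p
  by_cases ha : a ∈ m
  · simp [hop, ha, Multiset.cons_erase ha]
  · simp [hop, ha]

theorem hop_hop_neg {G : Type*} [AddGroup G] [DecidableEq G] (d : G) (p : Multiset G × G) :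
    hop d (hop (-d) p) = p := by
  simpa using hop_neg_hop (-d) p

section RingingPaths

variable {n : ℕ} (L : ℕ) (D : ℕ → Multiset (ZMod n)) (i : ZMod n)

theorem bfPath_succ_eq_hop (j : ℕ) : bfPath D i (j + 1) = (hop 1 (D j, bfPath D i j)).2 := by
  by_cases h : bfPath D i j ∈ D j <;> simp [bfPath, hop, h]

theorem bF_row_eq_hop {j : ℕ} (hj : j < L) :
    ((bF L D i).1 j, bfPath D i (j + 1)) = hop 1 (D j, bfPath D i j) := by
  by_cases h : bfPath D i j ∈ D j <;> simp [bF, bfPath, hop, hj, h]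

theorem bF_row_of_le {j : ℕ} (hj : L ≤ j) : (bF L D i).1 j = D j := by
  simp [bF, Nat.not_lt.2 hj]

theorem brPath_succ_add_one_eq_hop (t : ℕ) :
    brPath L D i (t + 1) + 1 = (hop (-1) (D (L - 1 - t), brPath L D i t + 1)).2 := by
  by_cases h : brPath L D i t + 1 ∈ D (L - 1 - t) <;> simp [brPath, hop, h]

theorem bR_row_eq_hop {j : ℕ} (hj : j < L) :
    ((bR L D i).1 j, brPath L D i (L - j) + 1) =
      hop (-1) (D j, brPath L D i (L - 1 - j) + 1) := by
  have hLj : L - j = L - 1 - j + 1 := by omega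
  have hrow : L - 1 - (L - 1 - j) = j := by omega
  rw [hLj, brPath_succ_add_one_eq_hop, hrow]
  by_cases h : brPath L D i (L - 1 - j) + 1 ∈ D j <;> simp [bR, hop, hj, h]

theorem bR_row_of_le {j : ℕ} (hj : L ≤ j) : (bR L D i).1 j = D j := by
  simp [bR, Nat.not_lt.2 hj]

theorem brPath_bF {t : ℕ} (ht : t ≤ L) :
    brPath L (bF L D i).1 (bF L D i).2 t + 1 = bfPath D i (L - t) := by
  induction t with
  | zero => simp [bF, brPath]
  | succ t ih =>
    have hj : L - 1 - t < L := by omega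
    have hrow := bF_row_eq_hop L D i hj
    rw [brPath_succ_add_one_eq_hop, ih (by omega), show L - t = L - 1 - t + 1 by omega, hrow,
      hop_neg_hop, show L - (t + 1) = L - 1 - t by omega]

theorem bfPath_bR {j : ℕ} (hj : j ≤ L) :
    bfPath (bR L D i).1 (bR L D i).2 j = brPath L D i (L - j) + 1 := by
  induction j with
  | zero => simp [bR, bfPath]
  | succ j ih =>
    rw [bfPath_succ_eq_hop, ih (by omega), bR_row_eq_hop L D i (by omega : j < L), hop_hop_neg,
      show L - (j + 1) = L - 1 - j by omega]

theorem bR_bF : bR L (bF L D i).1 (bF L D i).2 = (D, i) := by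
  refine Prod.ext (funext fun j => ?_) ?_
  · rcases lt_or_ge j L with hj | hj
    · have hpath := brPath_bF L D i (show L - 1 - j ≤ L by omega)
      rw [show L - (L - 1 - j) = j + 1 by omega] at hpath
      have hrow := congrArg Prod.fst (bR_row_eq_hop L (bF L D i).1 (bF L D i).2 hj)
      dsimp only at hrow
      rw [hrow, hpath, bF_row_eq_hop L D i hj, hop_neg_hop]
    · rw [bR_row_of_le L _ _ hj, bF_row_of_le L D i hj]
  · show brPath L (bF L D i).1 (bF L D i).2 L + 1 = i
    simpa [bfPath] using brPath_bF L D i le_rfl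

theorem bF_bR : bF L (bR L D i).1 (bR L D i).2 = (D, i) := by
  refine Prod.ext (funext fun j => ?_) ?_
  · rcases lt_or_ge j L with hj | hj
    · have hrow := congrArg Prod.fst (bF_row_eq_hop L (bR L D i).1 (bR L D i).2 hj)
      dsimp only at hrow
      rw [hrow, bfPath_bR L D i hj.le, bR_row_eq_hop L D i hj, hop_hop_neg]
    · rw [bF_row_of_le L _ _ hj, bR_row_of_le L D i hj]
  · show bfPath (bR L D i).1 (bR L D i).2 L - 1 = i
    simp [bfPath_bR L D i le_rfl, brPath]

end RingingPaths

theorem bosonic_ringing_inverse_general (n L : ℕ) (D : ℕ → Multiset (ZMod n))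
    (i : ZMod n) :
    bR L (bF L D i).1 (bF L D i).2 = (D, i) ∧ bF L (bR L D i).1 (bR L D i).2 = (D, i) :=
  ⟨bR_bF L D i, bF_bR L D i⟩

/-- the forward and reverse ringing-path maps on bosonic multiline queues
(of type `(λ,n)` with `L = λ_1` rows; rows beyond `L` empty) are mutually inverse:
`R̃(F̃(D,i)) = (D,i)` and `F̃(R̃(D,i)) = (D,i)`. -/
theorem bosonic_ringing_inverse (n L : ℕ) (D : ℕ → Multiset (ZMod n))
    (hbeyond : ∀ j, L ≤ j → D j = 0) (i : ZMod n) :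
    bR L (bF L D i).1 (bF L D i).2 = (D, i) ∧ bF L (bR L D i).1 (bR L D i).2 = (D, i) :=
  bosonic_ringing_inverse_general n L D i
end

section
/- If the ringing path on a bosonic multiline queue D triggered at site i is (𝔞_1,...,𝔞_{L+1}) and the reverse ringing path on F̃_i(D) triggered at site 𝔞_{L+1} − 1 is (𝔟_L,...,𝔟_0), then 𝔞_j = 𝔟_{j-1} + 1 for all 1 ≤ j ≤ L+1. -/
/-! Row `j` of `F̃_i(D)` contains `𝔞_{j+1}` exactly when the forward path hopped in row `j`
(it then deposited a particle there; otherwise the row is unchanged and `𝔞_{j+1} = 𝔞_j ∉ D_j`).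
So the reverse path, started at `𝔞_{L+1} − 1`, retraces the forward path backwards, row by row,
one site to the left. -/

section RingingPath

variable {n L : ℕ} {D : ℕ → Multiset (ZMod n)} {i : ZMod n} {j : ℕ}

lemma bfPath_succ_mem_bF_iff (hj : j < L) :
    bfPath D i (j + 1) ∈ (bF L D i).1 j ↔ bfPath D i j ∈ D j := by
  by_cases h : bfPath D i j ∈ D j
  · simp [bF, bfPath, hj, h]
  · simp only [bF, bfPath, if_pos hj, if_neg h]

lemma bfPath_sub_eq_brPath_bF_add_one {d : ℕ} (hd : d ≤ L) :
    bfPath D i (L - d) = brPath L (bF L D i).1 (bF L D i).2 d + 1 := by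
  induction d with
  | zero => simp [brPath, bF]
  | succ d ih =>
    obtain ⟨j, rfl⟩ : ∃ j, L = j + d + 1 := ⟨L - (d + 1), by omega⟩
    have hstep := ih (by omega)
    rw [show j + d + 1 - d = j + 1 by omega] at hstep
    have hmem := bfPath_succ_mem_bF_iff (D := D) (i := i) (show j < j + d + 1 by omega)
    rw [show j + d + 1 - (d + 1) = j by omega, brPath, show j + d + 1 - 1 - d = j by omega,
      eq_sub_of_add_eq hstep.symm, sub_add_cancel]
    by_cases h : bfPath D i j ∈ D j
    · rw [if_pos (hmem.2 h), show bfPath D i (j + 1) = bfPath D i j + 1 from if_pos h]; ring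
    · rw [if_neg (mt hmem.1 h), show bfPath D i (j + 1) = bfPath D i j from if_neg h]; ring

end RingingPath

/-- if the forward ringing path on `D` triggered at site `i` is
`(𝔞_1, …, 𝔞_{L+1})` and the reverse ringing path on `F̃_i(D)` triggered at site
`𝔞_{L+1} − 1` is `(𝔟_L, …, 𝔟_0)`, then `𝔞_j = 𝔟_{j-1} + 1` for all `1 ≤ j ≤ L+1`
(here `𝔞_{j+1} = bfPath D i j` and `𝔟_t = brPath L (F̃_i D) (𝔞_{L+1}−1) (L−t)`). -/
theorem bosonic_ringing_path_shift (n L : ℕ) (D : ℕ → Multiset (ZMod n)) (i : ZMod n) :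
    ∀ j, j ≤ L →
      bfPath D i j = brPath L (bF L D i).1 (bF L D i).2 (L - j) + 1 := by
  intro j hj
  simpa only [Nat.sub_sub_self hj] using bfPath_sub_eq_brPath_bF_add_one (D := D) (i := i)
    (Nat.sub_le L j)
end

section
/- For a bosonic multiline queue D of type (λ,n) and site i ∈ ℤ_n, let F̃(D,i) = (D', j). Then the weight monomial satisfies x^{D'} = x^D · x_{j+1} · x_i^{−1}. Equivalently, if column i of D is empty then D' = D and j+1 = i, otherwise the total number of particles at site i (summed over all rows) decreases by one and at site j+1 increases by one, all other column totals being unchanged. -/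
theorem Multiset.count_cons_erase_of_mem {α : Type*} [DecidableEq α] {m : Multiset α} {a : α}
    (ha : a ∈ m) (b s : α) :
    ((b ::ₘ m.erase a).count s : ℤ)
      = m.count s - (if s = a then 1 else 0) + (if s = b then 1 else 0) := by
  conv_rhs => rw [← Multiset.cons_erase ha]
  rw [Multiset.count_cons, Multiset.count_cons]
  push_cast
  ring

theorem Finset.prod_pow_eq_mul_div_of_count_shift {α G : Type*} [Fintype α] [DecidableEq α]
    [CommGroupWithZero G] (x : α → G) {c c' : α → ℕ} {a b : α} (ha : x a ≠ 0)
    (h : ∀ s, (c' s : ℤ) = c s - (if s = a then 1 else 0) + (if s = b then 1 else 0)) :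
    ∏ s, x s ^ c' s = (∏ s, x s ^ c s) * x b / x a := by
  have hshift : ∀ s, c' s + (if s = a then 1 else 0) = c s + (if s = b then 1 else 0) := by
    intro s
    have := h s
    split_ifs at * <;> omega
  have hprod : ∀ d : α, ∏ s, x s ^ (if s = d then 1 else 0) = x d := fun d => by
    simp [pow_ite]
  rw [eq_div_iff ha, ← hprod a, ← hprod b, ← Finset.prod_mul_distrib, ← Finset.prod_mul_distrib]
  simp only [← pow_add, hshift]

section Ringing

variable {n : ℕ} (L : ℕ) (D : ℕ → Multiset (ZMod n)) (i : ZMod n)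

theorem bF_snd_add_one : (bF L D i).2 + 1 = bfPath D i L := by
  simp [bF]

theorem count_bF_fst {j : ℕ} (hj : j < L) (s : ZMod n) :
    (((bF L D i).1 j).count s : ℤ)
      = (D j).count s - (if s = bfPath D i j then 1 else 0)
          + (if s = bfPath D i (j + 1) then 1 else 0) := by
  by_cases hmem : bfPath D i j ∈ D j
  · simp only [bF, bfPath, hj, hmem, if_true]
    exact Multiset.count_cons_erase_of_mem hmem _ s
  · simp [bF, bfPath, hj, hmem]

theorem colCount_bF (s : ZMod n) :
    (colCount L (bF L D i).1 s : ℤ)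
      = colCount L D s - (if s = i then 1 else 0)
          + (if s = (bF L D i).2 + 1 then 1 else 0) := by
  let onPath : ℕ → ℤ := fun j => if s = bfPath D i j then 1 else 0
  have hrows : ∀ j ∈ Finset.range L,
      (((bF L D i).1 j).count s : ℤ) = (D j).count s + (onPath (j + 1) - onPath j) := by
    intro j hj
    rw [count_bF_fst L D i (Finset.mem_range.mp hj)]
    ring
  have htelescope : ∑ j ∈ Finset.range L, (onPath (j + 1) - onPath j) = onPath L - onPath 0 :=
    Finset.sum_range_sub onPath L
  simp only [colCount, Nat.cast_sum]
  rw [Finset.sum_congr rfl hrows, Finset.sum_add_distrib, htelescope, bF_snd_add_one]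
  show _ = _ - onPath 0 + onPath L
  ring

theorem bfPath_of_colEmpty (hE : colEmpty L D i) {j : ℕ} (hj : j ≤ L) : bfPath D i j = i := by
  induction j with
  | zero => rfl
  | succ k ih =>
    have hk : k < L := hj
    simp [bfPath, ih hk.le, hE k hk]

theorem bF_fst_of_colEmpty (hE : colEmpty L D i) : (bF L D i).1 = D := by
  funext j
  by_cases hj : j < L
  · simp [bF, hj, hE j hj, bfPath_of_colEmpty L D i hE hj.le]
  · simp [bF, hj]

end Ringing

/-- with `F̃(D, i) = (D', j)`, the weight monomial satisfies
`x^{D'} = x^D · x_{j+1} · x_i^{−1}`.  Equivalently: the column totals of `D'` are those of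
`D` with one particle removed from column `i` and one added to column `j+1` (so if column
`i` is empty then `D' = D` and `j + 1 = i`). -/
theorem bosonic_forward_weight (n L : ℕ) [NeZero n] (D : ℕ → Multiset (ZMod n))
    (i : ZMod n) (x : ZMod n → ℝ) (hx : ∀ s, 0 < x s) :
    (∀ s : ZMod n,
      (colCount L (bF L D i).1 s : ℤ)
        = (colCount L D s : ℤ) - (if s = i then 1 else 0)
            + (if s = (bF L D i).2 + 1 then 1 else 0)) ∧
    (∏ s : ZMod n, x s ^ colCount L (bF L D i).1 s)
      = (∏ s : ZMod n, x s ^ colCount L D s) * x ((bF L D i).2 + 1) / x i ∧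
    (colEmpty L D i → (bF L D i).1 = D ∧ (bF L D i).2 + 1 = i) :=
  ⟨colCount_bF L D i,
    Finset.prod_pow_eq_mul_div_of_count_shift x (hx i).ne' (colCount_bF L D i),
    fun hE => ⟨bF_fst_of_colEmpty L D i hE,
      (bF_snd_add_one L D i).trans (bfPath_of_colEmpty L D i hE le_rfl)⟩⟩
end

section
/- The Markov chain on bosonic multiline queues defined by forward ringing paths satisfies the global balance condition with unnormalized stationary measure Wt(D) = x^D: for every D, Wt(D) · Σ_{j=1}^{n} rate(D, F̃_j(D)) = Σ_{j=1}^{n} Wt(R̃_j(D)) · rate(R̃_j(D), D), where rate(D, F̃_j(D)) = 1 if column j of D is empty and x_j^{−1} otherwise, and rate of the reverse transition R̃_j is 1 if column j is empty and x_{j+1}^{−1} otherwise. -/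
open scoped Classical in
/-- Forward transition rate at site `j`: `1` if column `j` is empty, `x_j⁻¹` otherwise. -/
noncomputable def fwdRate {n : ℕ} (x : ZMod n → ℝ) (L : ℕ) (D : ℕ → Multiset (ZMod n))
    (j : ZMod n) : ℝ :=
  if colEmpty L D j then 1 else (x j)⁻¹

/-- The weight `x^D = ∏_s x_s^{m_s(D)}`. -/
noncomputable def wt {n : ℕ} [NeZero n] (x : ZMod n → ℝ) (L : ℕ)
    (D : ℕ → Multiset (ZMod n)) : ℝ :=
  ∏ s : ZMod n, x s ^ colCount L D s

open Finset

theorem Multiset.prod_map_eq_prod_pow_count {α M : Type*} [Fintype α] [DecidableEq α]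
    [CommMonoid M] (f : α → M) (m : Multiset α) :
    (m.map f).prod = ∏ a, f a ^ m.count a := by
  rw [Finset.prod_multiset_map_count]
  refine prod_subset (subset_univ _) fun a _ ha => ?_
  rw [Multiset.count_eq_zero_of_notMem (Multiset.mem_toFinset.not.mp ha), pow_zero]

theorem Multiset.prod_map_cons_erase_mul {α M : Type*} [DecidableEq α] [CommMonoid M]
    (f : α → M) {m : Multiset α} {a : α} (ha : a ∈ m) (b : α) :
    ((b ::ₘ m.erase a).map f).prod * f a = (m.map f).prod * f b := by
  rw [← Multiset.prod_map_erase (f := f) ha, Multiset.map_cons, Multiset.prod_cons]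
  ac_rfl

theorem Finset.prod_range_mul_eq_of_mul_eq {M : Type*} [CommMonoid M] {f f' g : ℕ → M} {L : ℕ}
    (h : ∀ s < L, f' s * g s = f s * g (s + 1)) :
    (∏ s ∈ range L, f' s) * g 0 = (∏ s ∈ range L, f s) * g L := by
  induction L with
  | zero => simp
  | succ L ih =>
    rw [prod_range_succ, prod_range_succ, mul_right_comm, ih fun s hs => h s (by omega),
      mul_assoc, mul_comm (g L), h L (by omega), ← mul_assoc]

variable {n : ℕ} (L : ℕ) (D : ℕ → Multiset (ZMod n)) (j : ZMod n)

theorem wt_eq_prod_range {x : ZMod n → ℝ} [NeZero n] :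
    wt x L D = ∏ s ∈ range L, ((D (L - 1 - s)).map x).prod := by
  simp only [wt, colCount, ← prod_pow_eq_pow_sum, Multiset.prod_map_eq_prod_pow_count]
  rw [prod_comm, prod_range_reflect (fun t => ∏ a, x a ^ (D t).count a)]

theorem bR_fst_sub_one_sub {s : ℕ} (hs : s < L) :
    (bR L D j).1 (L - 1 - s) =
      if brPath L D j s + 1 ∈ D (L - 1 - s) then
        brPath L D j s ::ₘ (D (L - 1 - s)).erase (brPath L D j s + 1)
      else D (L - 1 - s) := by
  simp only [bR, if_pos (show L - 1 - s < L by omega), Nat.sub_sub_self (show s ≤ L - 1 by omega)]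

theorem prod_map_bR_fst_mul (x : ZMod n → ℝ) {s : ℕ} (hs : s < L) :
    (((bR L D j).1 (L - 1 - s)).map x).prod * x (brPath L D j s + 1)
      = ((D (L - 1 - s)).map x).prod * x (brPath L D j (s + 1) + 1) := by
  rw [bR_fst_sub_one_sub L D j hs, brPath]
  split_ifs with hmem
  · rw [sub_add_cancel, Multiset.prod_map_cons_erase_mul x hmem]
  · rfl

theorem wt_bR_mul {x : ZMod n → ℝ} [NeZero n] :
    wt x L (bR L D j).1 * x (j + 1) = wt x L D * x (bR L D j).2 := by
  rw [wt_eq_prod_range, wt_eq_prod_range]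
  exact prod_range_mul_eq_of_mul_eq (g := fun s => x (brPath L D j s + 1))
    fun s hs => prod_map_bR_fst_mul L D j x hs

variable {L D j}

theorem brPath_eq_of_colEmpty (h : colEmpty L D (j + 1)) {t : ℕ} (ht : t ≤ L) :
    brPath L D j t = j := by
  induction t with
  | zero => rfl
  | succ t ih => rw [brPath, ih (by omega), if_neg (h _ (by omega))]

theorem bR_of_colEmpty (h : colEmpty L D (j + 1)) : bR L D j = (D, j + 1) := by
  refine Prod.ext (funext fun r => ?_) (congrArg (· + 1) (brPath_eq_of_colEmpty h le_rfl))
  simp only [bR]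
  split_ifs with hr hmem
  · rw [brPath_eq_of_colEmpty h (by omega)] at hmem
    exact absurd hmem (h r hr)
  all_goals rfl

theorem brPath_add_one_mem_bR_or {t : ℕ} (ht : t ≤ L) :
    (∃ s < t, brPath L D j t + 1 ∈ (bR L D j).1 (L - 1 - s)) ∨
      (brPath L D j t = j ∧ ∀ s < t, j + 1 ∉ D (L - 1 - s)) := by
  induction t with
  | zero => exact Or.inr ⟨rfl, fun s hs => absurd hs (Nat.not_lt_zero s)⟩
  | succ t ih =>
    rw [brPath]
    by_cases hmove : brPath L D j t + 1 ∈ D (L - 1 - t)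
    · refine Or.inl ⟨t, Nat.lt_succ_self t, ?_⟩
      rw [if_pos hmove, sub_add_cancel, bR_fst_sub_one_sub L D j (by omega), if_pos hmove]
      exact Multiset.mem_cons_self _ _
    · rw [if_neg hmove]
      rcases ih (by omega) with ⟨s, hs, hmem⟩ | ⟨hj, hempty⟩
      · exact Or.inl ⟨s, by omega, hmem⟩
      · refine Or.inr ⟨hj, fun s hs => ?_⟩
        rcases Nat.lt_succ_iff_lt_or_eq.mp hs with hs | rfl
        · exact hempty s hs
        · rwa [hj] at hmove

theorem not_colEmpty_bR (h : ¬ colEmpty L D (j + 1)) :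
    ¬ colEmpty L (bR L D j).1 (bR L D j).2 := by
  rcases brPath_add_one_mem_bR_or (L := L) (D := D) (j := j) le_rfl with
    ⟨s, hs, hmem⟩ | ⟨-, hempty⟩
  · exact fun hc => hc _ (by omega) hmem
  · refine absurd (fun r hr => ?_) h
    simpa [Nat.sub_sub_self (show r ≤ L - 1 by omega)] using hempty (L - 1 - r) (by omega)

theorem wt_bR_mul_fwdRate [NeZero n] {x : ZMod n → ℝ} (hx : ∀ s, x s ≠ 0) :
    wt x L (bR L D j).1 * fwdRate x L (bR L D j).1 (bR L D j).2
      = wt x L D * fwdRate x L D (j + 1) := by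
  by_cases h : colEmpty L D (j + 1)
  · rw [bR_of_colEmpty h]
  · rw [fwdRate, fwdRate, if_neg h, if_neg (not_colEmpty_bR h), eq_mul_inv_iff_mul_eq₀ (hx _),
      mul_right_comm, wt_bR_mul, mul_inv_cancel_right₀ (hx _)]

/-- the Markov chain on bosonic multiline queues defined by forward ringing
paths satisfies the global balance condition with unnormalized stationary measure
`Wt(D) = x^D`: the total outgoing rate from `D` weighted by `Wt(D)` equals the total
weighted incoming rate, where the incoming transitions are the forward transitions from
the reverse-transition states `R̃_j(D)` (each triggered at site `(R̃(D,j)).2`). -/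
theorem bosonic_global_balance (n L : ℕ) [NeZero n] (D : ℕ → Multiset (ZMod n))
    (x : ZMod n → ℝ) (hx : ∀ s, 0 < x s) :
    wt x L D * ∑ j : ZMod n, fwdRate x L D j
      = ∑ j : ZMod n, wt x L (bR L D j).1 * fwdRate x L (bR L D j).1 (bR L D j).2 := by
  rw [mul_sum]
  exact (Fintype.sum_equiv (Equiv.addRight 1) _ _
    fun j => wt_bR_mul_fwdRate fun s => (hx s).ne').symm
end

section
/- Increment compatibility of the fermionic pairing operator: for any Q ⊆ [n], integer ℓ ≥ 1, and word v ∈ ℕ^n with ℓ < min of the nonzero entries of v, one has (Q^{(ℓ)}(v))^{(+1)} = Q^{(ℓ+1)}(v^{(+1)}), where w^{(+1)} increments every nonzero entry of w by 1. -/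
/-- `u^{(r)}`: the set of sites carrying a particle with label at least `r`. -/
def levelSet {n : ℕ} (u : Fin n → ℕ) (r : ℕ) : Finset (Fin n) :=
  Finset.univ.filter (fun j => r ≤ u j)

/-- Particles of the queue `Q` that are matched (paired) in `Par(Q, B)`. -/
def matchedQ {n : ℕ} (Q B : Finset (Fin n)) : Finset (Fin n) :=
  Q \ unmatchedClose Q B

/-- The set of sites whose output label under `Q^{(ℓ)}(u)` is at least `r`
(cf. Remark 3.2): for `r ≤ ℓ` it is all of `Q` together with the particles of `u^{(r+1)}`
that collapse, and for `r > ℓ` it is the particles of `Q` matched in `Par(Q, u^{(r)})`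
together with the particles of `u^{(r+1)}` that collapse. -/
def labelLevel {n : ℕ} (ℓ : ℕ) (Q : Finset (Fin n)) (u : Fin n → ℕ) (r : ℕ) :
    Finset (Fin n) :=
  (if r ≤ ℓ then Q else matchedQ Q (levelSet u r)) ∪ unmatchedOpen Q (levelSet u (r + 1))

/-- The fermionic pairing operator `Q^{(ℓ)} : 𝒲 → 𝒲`: the output word, whose value at a
site is the label assigned there (the sum of the nested indicator vectors of the label
level sets). -/
def Qop {n : ℕ} (ℓ : ℕ) (Q : Finset (Fin n)) (u : Fin n → ℕ) : Fin n → ℕ :=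
  fun j => ∑ r ∈ Finset.Icc 1 (ℓ + 1 + ∑ j', u j'), if j ∈ labelLevel ℓ Q u r then 1 else 0

/-- `u^{(+1)}`: increment every nonzero entry by one. -/
def incWord {n : ℕ} (u : Fin n → ℕ) : Fin n → ℕ :=
  fun j => if u j = 0 then 0 else u j + 1


/-!
Write `L_r` for `labelLevel ℓ Q v r`, so that `Q^{(ℓ)}(v)(j)` counts the `r ≥ 1` with `j ∈ L_r`.
Incrementing `v` shifts its level sets up by one, so the label level sets of
`Q^{(ℓ+1)}(v^{(+1)})` are `L_0, L_1, L_2, …` and `Q^{(ℓ+1)}(v^{(+1)})(j) = [j ∈ L_0] + Q^{(ℓ)}(v)(j)`.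
Every `L_r` lies in `L_0`, because a particle left unpaired in `Par(Q, B)` stays unpaired when
particles are added to `B`, and `L_1 = L_0` because no entry of `v` equals `1`. So
`Q^{(ℓ)}(v)(j) ≠ 0` exactly when `j ∈ L_0`, which is the increment.
-/

section PairProcess

variable {α : Type}

theorem pairProcess_append (ts₁ ts₂ : List (α × Bool)) (o c : List α) :
    pairProcess (ts₁ ++ ts₂) o c
      = pairProcess ts₂ (pairProcess ts₁ o c).1 (pairProcess ts₁ o c).2 := by
  fun_induction pairProcess ts₁ o c <;> simp_all [pairProcess]

theorem pairProcess_eq (ts : List (α × Bool)) (o c : List α) :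
    pairProcess ts o c =
      ((pairProcess ts [] []).1 ++ o.drop (pairProcess ts [] []).2.length,
       (pairProcess ts [] []).2.take ((pairProcess ts [] []).2.length - o.length) ++ c) := by
  induction ts using List.reverseRecOn with
  | nil => simp [pairProcess]
  | append_singleton ts t ih =>
    rw [pairProcess_append, pairProcess_append, ih]
    obtain ⟨O, C⟩ := pairProcess ts [] []
    obtain ⟨a, _ | _⟩ := t
    · cases O with
      | cons x O => simp [pairProcess]
      | nil =>
        rcases lt_or_ge C.length o.length with h | h
        · rw [List.drop_eq_getElem_cons h]
          simp only [pairProcess, List.nil_append, List.length_cons,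
            Nat.sub_eq_zero_of_le h, Nat.sub_eq_zero_of_le h.le, List.take_zero]
        · rw [List.drop_eq_nil_of_le h]
          simp only [pairProcess, List.nil_append, List.length_cons, Nat.succ_sub h,
            List.take_succ_cons, List.drop_eq_nil_of_le (h.trans (Nat.le_succ _)),
            List.cons_append]
    · simp [pairProcess]

theorem pairProcess_of_forall_snd_eq_false {ts : List (α × Bool)} (h : ∀ t ∈ ts, t.2 = false)
    (c : List α) : pairProcess ts [] c = ([], (ts.map Prod.fst).reverse ++ c) := by
  induction ts generalizing c with
  | nil => rfl
  | cons t ts ih =>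
    obtain ⟨a, b⟩ := t
    obtain rfl : b = false := h _ List.mem_cons_self
    simp [pairProcess, ih fun t ht => h t (List.mem_cons_of_mem _ ht)]

def cyclicOpens (p : List α × List α) : List α :=
  p.1.drop p.2.length

theorem cyclicOpens_pairProcess_sublist_cons (ts : List (α × Bool)) (b : α) (o c : List α) :
    (cyclicOpens (pairProcess ts o c)).Sublist (cyclicOpens (pairProcess ts (b :: o) c)) := by
  rw [pairProcess_eq ts o, pairProcess_eq ts (b :: o)]
  obtain ⟨O, C⟩ := pairProcess ts [] []
  simp only [cyclicOpens, List.length_append, List.length_take, List.length_cons]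
  -- The extra open `b` either stays unmatched or cancels one of the surplus closes of `ts`.
  rcases le_or_gt C.length o.length with h | h
  · rw [Nat.sub_eq_zero_of_le h, Nat.sub_eq_zero_of_le (h.trans (Nat.le_succ _))]
    exact ((o.sublist_cons_self b).drop _).append_left O |>.drop _
  · rw [List.drop_eq_nil_of_le (as := o) h.le, List.drop_eq_nil_of_le (as := b :: o) h]
    exact List.drop_sublist_drop_left _ (by omega)

end PairProcess

section Pairing

variable {n : ℕ}

def siteTokens (A B : Finset (Fin n)) (j : Fin n) : List (Fin n × Bool) :=
  (if j ∈ B then [(j, true)] else []) ++ (if j ∈ A then [(j, false)] else [])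

theorem parTokens_eq_flatMap (A B : Finset (Fin n)) :
    parTokens A B = (List.finRange n).flatMap (siteTokens A B) := rfl

theorem parTokens_insert (A S : Finset (Fin n)) {b : Fin n} (hb : b ∉ S) :
    ∃ ts₁ ts₂, parTokens A S = ts₁ ++ ts₂ ∧
      parTokens A (insert b S) = ts₁ ++ (b, true) :: ts₂ := by
  obtain ⟨l₁, l₂, hsplit⟩ := List.append_of_mem (List.mem_finRange b)
  have hnodup := List.nodup_finRange n
  rw [hsplit, List.nodup_middle, List.nodup_cons] at hnodup
  have hsite : ∀ j ∈ l₁ ++ l₂, siteTokens A (insert b S) j = siteTokens A S j := by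
    intro j hj
    have hjb : j ≠ b := by
      rintro rfl
      exact hnodup.1 hj
    simp [siteTokens, hjb]
  refine ⟨l₁.flatMap (siteTokens A S), siteTokens A S b ++ l₂.flatMap (siteTokens A S),
    ?_, ?_⟩
  · rw [parTokens_eq_flatMap, hsplit, List.flatMap_append, List.flatMap_cons]
  · rw [parTokens_eq_flatMap, hsplit, List.flatMap_append, List.flatMap_cons,
      List.flatMap_congr fun j hj => hsite j (List.mem_append_left l₂ hj),
      List.flatMap_congr fun j hj => hsite j (List.mem_append_right l₁ hj)]
    simp [siteTokens, hb]

theorem unmatchedOpen_eq (A B : Finset (Fin n)) :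
    unmatchedOpen A B = (cyclicOpens (parRes A B)).toFinset := rfl

theorem unmatchedOpen_subset_insert (A S : Finset (Fin n)) (b : Fin n) :
    unmatchedOpen A S ⊆ unmatchedOpen A (insert b S) := by
  by_cases hb : b ∈ S
  · rw [Finset.insert_eq_of_mem hb]
  obtain ⟨ts₁, ts₂, hS, hS'⟩ := parTokens_insert A S hb
  intro j
  simp only [unmatchedOpen_eq, parRes, hS, hS', pairProcess_append, List.mem_toFinset]
  exact fun h => (cyclicOpens_pairProcess_sublist_cons ts₂ b _ _).subset h

theorem unmatchedOpen_mono (A : Finset (Fin n)) : Monotone (unmatchedOpen A) := by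
  intro S T hST
  rw [← Finset.union_sdiff_of_subset hST]
  induction T \ S using Finset.induction_on with
  | empty => rw [Finset.union_empty]
  | insert b U _ ih =>
    rw [Finset.union_insert]
    exact ih.trans (unmatchedOpen_subset_insert A _ b)

theorem parRes_empty (A : Finset (Fin n)) :
    parRes A ∅ = ([], ((parTokens A ∅).map Prod.fst).reverse) := by
  refine (pairProcess_of_forall_snd_eq_false (fun t ht => ?_) []).trans (by rw [List.append_nil])
  simp only [parTokens_eq_flatMap, siteTokens, Finset.notMem_empty, if_false, List.nil_append,
    List.mem_flatMap] at ht
  obtain ⟨j, -, hj⟩ := ht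
  split_ifs at hj
  · rw [List.mem_singleton.mp hj]
  · simp at hj

theorem unmatchedOpen_empty (A : Finset (Fin n)) : unmatchedOpen A ∅ = ∅ := by
  simp [unmatchedOpen, parRes_empty]

theorem unmatchedClose_empty (A : Finset (Fin n)) : unmatchedClose A ∅ = A := by
  ext j
  simp only [unmatchedClose, parRes_empty, List.length_nil, Nat.sub_zero, List.take_length]
  simp [parTokens_eq_flatMap, siteTokens]

end Pairing

theorem Finset.sum_Icc_one_succ {M : Type*} [AddCommMonoid M] (f : ℕ → M) (K : ℕ) :
    ∑ r ∈ Finset.Icc 1 (K + 1), f r = f 1 + ∑ r ∈ Finset.Icc 1 K, f (r + 1) := by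
  rw [← Finset.add_sum_Ioc_eq_sum_Icc (by omega), ← Finset.Icc_add_one_left_eq_Ioc,
    ← Finset.map_add_right_Icc, Finset.sum_map]
  rfl

section Levels

variable {n : ℕ}

theorem levelSet_antitone (u : Fin n → ℕ) : Antitone (levelSet u) := by
  intro r s hrs j
  simp only [levelSet, Finset.mem_filter, Finset.mem_univ, true_and]
  exact hrs.trans

theorem levelSet_eq_empty {u : Fin n → ℕ} {r : ℕ} (hu : ∀ j, u j < r) :
    levelSet u r = ∅ := by
  simpa [levelSet] using hu

theorem levelSet_incWord (u : Fin n → ℕ) {r : ℕ} (hr : 1 ≤ r) :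
    levelSet (incWord u) (r + 1) = levelSet u r := by
  ext j
  simp only [levelSet, Finset.mem_filter, Finset.mem_univ, true_and]
  unfold incWord
  split_ifs <;> omega

theorem levelSet_two_eq_one {u : Fin n → ℕ} (hu : ∀ j, u j ≠ 1) :
    levelSet u 2 = levelSet u 1 := by
  ext j
  simp only [levelSet, Finset.mem_filter, Finset.mem_univ, true_and]
  have := hu j
  omega

theorem lt_add_one_add_sum (u : Fin n → ℕ) (m : ℕ) (i : Fin n) : u i < m + 1 + ∑ i', u i' :=
  Nat.lt_of_le_of_lt (Finset.single_le_sum (fun _ _ => Nat.zero_le _) (Finset.mem_univ i))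
    (by omega)

theorem incWord_le (u : Fin n → ℕ) (j : Fin n) : incWord u j ≤ u j + 1 := by
  unfold incWord
  split_ifs <;> omega

theorem labelLevel_incWord (ℓ : ℕ) (Q : Finset (Fin n)) (u : Fin n → ℕ) (r : ℕ) :
    labelLevel (ℓ + 1) Q (incWord u) (r + 1) = labelLevel ℓ Q u r := by
  rw [labelLevel, labelLevel, levelSet_incWord u (r := r + 1) (by omega)]
  by_cases h : r ≤ ℓ
  · rw [if_pos (by omega), if_pos h]
  · rw [if_neg (by omega), if_neg h, levelSet_incWord u (by omega)]

theorem labelLevel_eq_empty {ℓ r : ℕ} (Q : Finset (Fin n)) {u : Fin n → ℕ} (hℓ : ℓ < r)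
    (hu : ∀ j, u j < r) : labelLevel ℓ Q u r = ∅ := by
  rw [labelLevel, if_neg (by omega), levelSet_eq_empty hu,
    levelSet_eq_empty fun j => (hu j).trans r.lt_succ_self, unmatchedOpen_empty, matchedQ,
    unmatchedClose_empty, Finset.sdiff_self, Finset.empty_union]

theorem labelLevel_subset_zero (ℓ : ℕ) (Q : Finset (Fin n)) (u : Fin n → ℕ) (r : ℕ) :
    labelLevel ℓ Q u r ⊆ labelLevel ℓ Q u 0 := by
  rw [labelLevel, labelLevel, if_pos (Nat.zero_le ℓ)]
  refine Finset.union_subset_union ?_ (unmatchedOpen_mono Q (levelSet_antitone u (by omega)))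
  split_ifs
  exacts [subset_rfl, Finset.sdiff_subset]

theorem labelLevel_one_eq_zero {ℓ : ℕ} (Q : Finset (Fin n)) {u : Fin n → ℕ} (hℓ : 1 ≤ ℓ)
    (hu : ∀ j, u j ≠ 1) : labelLevel ℓ Q u 1 = labelLevel ℓ Q u 0 := by
  rw [labelLevel, labelLevel, if_pos hℓ, if_pos (Nat.zero_le ℓ), levelSet_two_eq_one hu]

theorem Qop_eq_sum {ℓ K : ℕ} (Q : Finset (Fin n)) {u : Fin n → ℕ} (hℓ : ℓ < K)
    (hu : ∀ j, u j < K) (j : Fin n) :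
    Qop ℓ Q u j = ∑ r ∈ Finset.Icc 1 K, if j ∈ labelLevel ℓ Q u r then 1 else 0 := by
  have hsum_eq {a : ℕ} (hℓa : ℓ < a) (hua : ∀ i, u i < a) {b : ℕ} (hab : a ≤ b) :
      (∑ r ∈ Finset.Icc 1 b, if j ∈ labelLevel ℓ Q u r then 1 else 0)
        = ∑ r ∈ Finset.Icc 1 a, if j ∈ labelLevel ℓ Q u r then 1 else 0 := by
    refine (Finset.sum_subset (Finset.Icc_subset_Icc_right hab) fun r hr har => ?_).symm
    have har : a < r := by simp_all
    rw [labelLevel_eq_empty Q (hℓa.trans har) fun i => (hua i).trans har,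
      if_neg (Finset.notMem_empty j)]
  have hℓmin : ℓ < min (ℓ + 1 + ∑ i, u i) K := lt_min (by omega) hℓ
  have humin (i : Fin n) : u i < min (ℓ + 1 + ∑ i, u i) K :=
    lt_min (lt_add_one_add_sum u ℓ i) (hu i)
  rw [Qop, hsum_eq hℓmin humin (min_le_left _ _), hsum_eq hℓmin humin (min_le_right _ _)]

theorem Qop_ne_zero_iff {ℓ : ℕ} (Q : Finset (Fin n)) {u : Fin n → ℕ} (hℓ : 1 ≤ ℓ)
    (hu : ∀ j, u j ≠ 1) (j : Fin n) : Qop ℓ Q u j ≠ 0 ↔ j ∈ labelLevel ℓ Q u 0 := by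
  simp only [Qop, ne_eq, Finset.sum_eq_zero_iff, Finset.mem_Icc, ite_eq_right_iff, one_ne_zero,
    imp_false, not_forall, not_not]
  constructor
  · rintro ⟨r, -, hr⟩
    exact labelLevel_subset_zero ℓ Q u r hr
  · intro h
    exact ⟨1, ⟨le_rfl, by omega⟩, by rwa [labelLevel_one_eq_zero Q hℓ hu]⟩

theorem incWord_Qop_apply {ℓ : ℕ} (Q : Finset (Fin n)) {u : Fin n → ℕ} (hℓ : 1 ≤ ℓ)
    (hu : ∀ j, u j ≠ 1) (j : Fin n) :
    incWord (Qop ℓ Q u) j = (if j ∈ labelLevel ℓ Q u 0 then 1 else 0) + Qop ℓ Q u j := by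
  have hiff := Qop_ne_zero_iff Q hℓ hu j
  by_cases h : Qop ℓ Q u j = 0
  · have hj : j ∉ labelLevel ℓ Q u 0 := fun hj => hiff.mpr hj h
    simp [incWord, h, hj]
  · simp [incWord, h, hiff.mp h, add_comm]

end Levels

/-- increment compatibility of the fermionic pairing operator: for
`Q ⊆ [n]`, `ℓ ≥ 1` and a word `v` all of whose nonzero entries exceed `ℓ`,
`(Q^{(ℓ)}(v))^{(+1)} = Q^{(ℓ+1)}(v^{(+1)})`. -/
theorem pairing_operator_increment (n : ℕ) (Q : Finset (Fin n)) (v : Fin n → ℕ)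
    (ℓ : ℕ) (hℓ : 1 ≤ ℓ) (hv : ∀ j, v j ≠ 0 → ℓ < v j) :
    incWord (Qop ℓ Q v) = Qop (ℓ + 1) Q (incWord v) := by
  funext j
  set K := ℓ + 1 + ∑ i, v i
  have hv_ne_one (i : Fin n) : v i ≠ 1 := fun h => by have := hv i (by omega); omega
  have hvK : ∀ i, v i < K := lt_add_one_add_sum v ℓ
  calc incWord (Qop ℓ Q v) j
      = (if j ∈ labelLevel ℓ Q v 0 then 1 else 0) + Qop ℓ Q v j :=
        incWord_Qop_apply Q hℓ hv_ne_one j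
    _ = ∑ r ∈ Finset.Icc 1 (K + 1),
          if j ∈ labelLevel (ℓ + 1) Q (incWord v) r then 1 else 0 := by
        rw [Finset.sum_Icc_one_succ, Qop_eq_sum Q (by omega) hvK]
        simp only [labelLevel_incWord]
    _ = Qop (ℓ + 1) Q (incWord v) j :=
        (Qop_eq_sum Q (K := K + 1) (by omega)
          (fun i => (incWord_le v i).trans_lt (Nat.add_lt_add_right (hvK i) 1)) j).symm
end
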